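/- Let u : (0,∞) → [0,∞) be non-increasing with ū(y) := ∫_y^∞ u(r) dr < ∞ for every y > 0, and let β > 0. Then the function y ↦ e^{−βy} ( u(y) + β ū(y) ) is non-increasing on (0,∞). Consequently, if a measure μ on (0,∞) has a non-increasing density u, then the measure μ^β(dy) = e^{−βy} ( μ(dy) + β μ((y,∞)) dy ) also has a non-increasing density, i.e. the class 𝒫 of positive measures on ℝ₊ admitting a non-increasing density is preserved. -/

import Mathlib

open MeasureTheory Real Set

/-! Since `u ≥ 0` is non-increasing, so is `u + β ū`; multiplying this non-negative,
non-increasing function by the non-increasing positive factor `e^{-βy}` keeps it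
non-increasing. For the measure statement, `μ((y,∞)) = ū(y)`, so the density of `μ^β`
with respect to Lebesgue measure on `(0,∞)` is exactly `e^{-βy}(u(y) + β ū(y))`. -/

section TailIntegral

variable {u : ℝ → ℝ} {a : ℝ}

theorem antitoneOn_setIntegral_Ioi (hu0 : ∀ y ∈ Ioi a, 0 ≤ u y)
    (hui : ∀ y, a < y → IntegrableOn u (Ioi y)) :
    AntitoneOn (fun y => ∫ r in Ioi y, u r) (Ioi a) := fun x hx _ _ hxy =>
  setIntegral_mono_set (hui x hx)
    ((ae_restrict_iff' measurableSet_Ioi).2 (ae_of_all _ fun r hr => hu0 r (Ioi_subset_Ioi (le_of_lt hx) hr)))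
    (Ioi_subset_Ioi hxy).eventuallyLE

theorem setIntegral_Ioi_nonneg (hu0 : ∀ y ∈ Ioi a, 0 ≤ u y) {y : ℝ} (hy : a < y) :
    0 ≤ ∫ r in Ioi y, u r :=
  setIntegral_nonneg measurableSet_Ioi fun r hr => hu0 r (lt_trans hy hr)

theorem antitoneOn_exp_mul_add_setIntegral_Ioi (hu0 : ∀ y ∈ Ioi a, 0 ≤ u y)
    (hu : AntitoneOn u (Ioi a)) (hui : ∀ y, a < y → IntegrableOn u (Ioi y))
    {β : ℝ} (hβ : 0 ≤ β) :
    AntitoneOn (fun y => exp (-β * y) * (u y + β * ∫ r in Ioi y, u r)) (Ioi a) := by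
  intro x hx y hy hxy
  have hbracket : 0 ≤ u y + β * ∫ r in Ioi y, u r :=
    add_nonneg (hu0 y hy) (mul_nonneg hβ (setIntegral_Ioi_nonneg hu0 hy))
  calc exp (-β * y) * (u y + β * ∫ r in Ioi y, u r)
      ≤ exp (-β * x) * (u y + β * ∫ r in Ioi y, u r) :=
        mul_le_mul_of_nonneg_right (exp_le_exp.2 (by nlinarith)) hbracket
    _ ≤ exp (-β * x) * (u x + β * ∫ r in Ioi x, u r) :=
        mul_le_mul_of_nonneg_left
          (add_le_add (hu hx hy hxy)
            (mul_le_mul_of_nonneg_left (antitoneOn_setIntegral_Ioi hu0 hui hx hy hxy) hβ))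
          (exp_pos _).le

theorem withDensity_ofReal_apply_Ioi (hu0 : ∀ y ∈ Ioi a, 0 ≤ u y) {y : ℝ} (hy : a < y)
    (hui : IntegrableOn u (Ioi y)) :
    (volume.restrict (Ioi a)).withDensity (fun r => ENNReal.ofReal (u r)) (Ioi y) =
      ENNReal.ofReal (∫ r in Ioi y, u r) := by
  rw [withDensity_apply _ measurableSet_Ioi, Measure.restrict_restrict measurableSet_Ioi,
    inter_eq_left.2 (Ioi_subset_Ioi hy.le),
    ofReal_integral_eq_lintegral_ofReal hui
      ((ae_restrict_iff' measurableSet_Ioi).2 (ae_of_all _ fun r hr => hu0 r (lt_trans hy hr)))]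

theorem withDensity_exp_add_withDensity_tail_eq {μ : Measure ℝ} (hu0 : ∀ y ∈ Ioi a, 0 ≤ u y)
    (hu : AntitoneOn u (Ioi a)) (hui : ∀ y, a < y → IntegrableOn u (Ioi y))
    {β : ℝ} (hβ : 0 ≤ β)
    (hμ : μ = (volume.restrict (Ioi a)).withDensity (fun y => ENNReal.ofReal (u y))) :
    μ.withDensity (fun y => ENNReal.ofReal (exp (-β * y))) +
        (volume.restrict (Ioi a)).withDensity
          (fun y => ENNReal.ofReal (exp (-β * y) * β * (μ (Ioi y)).toReal)) =
      (volume.restrict (Ioi a)).withDensity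
        (fun y => ENNReal.ofReal (exp (-β * y) * (u y + β * ∫ r in Ioi y, u r))) := by
  have hexp : Measurable fun y : ℝ => ENNReal.ofReal (exp (-β * y)) := by fun_prop
  have htail : Measurable fun y => (μ (Ioi y)).toReal :=
    (Antitone.measurable fun _ _ hxy => measure_mono (Ioi_subset_Ioi hxy)).ennreal_toReal
  rw [hμ, ← withDensity_mul₀
      (aemeasurable_restrict_of_antitoneOn measurableSet_Ioi hu).ennreal_ofReal
      hexp.aemeasurable, ← hμ, ← withDensity_add_right _ (by fun_prop)]
  refine withDensity_congr_ae ?_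
  filter_upwards [ae_restrict_mem measurableSet_Ioi] with y hy
  have htail_nonneg := setIntegral_Ioi_nonneg hu0 hy
  rw [Pi.add_apply, Pi.mul_apply, hμ, withDensity_ofReal_apply_Ioi hu0 hy (hui y hy),
    ENNReal.toReal_ofReal htail_nonneg, ← ENNReal.ofReal_mul (hu0 y hy),
    ← ENNReal.ofReal_add (mul_nonneg (hu0 y hy) (exp_pos _).le) (by positivity)]
  congr 1
  ring

end TailIntegral

/-- Let `u : (0,∞) → [0,∞)` be non-increasing with `ū(y) = ∫_y^∞ u(r) dr < ∞` for each
`y > 0`, and `β > 0`. Then `y ↦ e^{-βy}(u(y) + β ū(y))` is non-increasing on `(0,∞)`.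
Consequently, if a measure `μ` on `(0,∞)` has non-increasing density `u`, then
`μ^β(dy) = e^{-βy}(μ(dy) + β μ((y,∞)) dy)` also has a non-increasing density, i.e. the
class `𝒫` of positive measures on `ℝ₊` admitting a non-increasing density is preserved. -/
theorem stmt6 (u : ℝ → ℝ) (hu0 : ∀ y ∈ Ioi (0:ℝ), 0 ≤ u y)
    (hu : AntitoneOn u (Ioi 0))
    (hui : ∀ y : ℝ, 0 < y → IntegrableOn u (Ioi y) volume)
    (β : ℝ) (hβ : 0 < β) :
    AntitoneOn
        (fun y : ℝ => exp (-β * y) * (u y + β * ∫ r in Ioi y, u r)) (Ioi 0) ∧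
      ∀ μ : Measure ℝ,
        μ = (volume.restrict (Ioi (0:ℝ))).withDensity
              (fun y => ENNReal.ofReal (u y)) →
        ∃ w : ℝ → ℝ, AntitoneOn w (Ioi 0) ∧
          μ.withDensity (fun y => ENNReal.ofReal (exp (-β * y))) +
              (volume.restrict (Ioi (0:ℝ))).withDensity
                (fun y => ENNReal.ofReal (exp (-β * y) * β * (μ (Ioi y)).toReal)) =
            (volume.restrict (Ioi (0:ℝ))).withDensity
              (fun y => ENNReal.ofReal (w y)) := by
  have hanti := antitoneOn_exp_mul_add_setIntegral_Ioi hu0 hu hui hβ.le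
  exact ⟨hanti, fun μ hμ =>
    ⟨_, hanti, withDensity_exp_add_withDensity_tail_eq hu0 hu hui hβ.le hμ⟩⟩
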